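/- arXiv:2508.18593 — 6 statements merged into one kernel-verified Lean document; each statement's English description precedes it below -/
import Mathlib

section
/- The star graph X_n = Cay(S_{n+1}, {τ_1,...,τ_n}) is a covering graph of the complete graph K_{n+1} via the map ξ ↦ ξ(n+1): for each vertex ξ, the map induces a bijection from the neighbors of ξ in X_n to the neighbors of ξ(n+1) in K_{n+1}. -/
open Equiv Equiv.Perm

/-- The star graph `X_n = Cay(S_{n+1}, {τ_1,…,τ_n})`, where `τ_i = (i, n+1)`. -/
def starGraph (n : ℕ) : SimpleGraph (Equiv.Perm (Fin (n + 1))) :=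
  SimpleGraph.fromRel (fun ξ η =>
    ∃ i : Fin n, η = ξ * Equiv.swap (Fin.castSucc i) (Fin.last n))

/-! The neighbours of `ξ` are the `ξ * τ_i`, and `(ξ * τ_i)(n+1) = ξ(i)`. So the map is
`i ↦ ξ(i)` on the generators, a bijection from `{1,…,n}` onto the complement of `ξ(n+1)`. -/

theorem Fin.range_castSucc_eq_compl_last (n : ℕ) :
    Set.range (Fin.castSucc : Fin n → Fin (n + 1)) = {Fin.last n}ᶜ :=
  Set.ext fun _ => Fin.exists_castSucc_eq

theorem starGraph_adj_iff {n : ℕ} {ξ η : Perm (Fin (n + 1))} :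
    (starGraph n).Adj ξ η ↔ ∃ i : Fin n, η = ξ * swap (Fin.castSucc i) (Fin.last n) := by
  simp only [starGraph, SimpleGraph.fromRel_adj]
  constructor
  · rintro ⟨-, h | ⟨i, rfl⟩⟩
    · exact h
    · exact ⟨i, (mul_swap_mul_self _ _ η).symm⟩
  · rintro ⟨i, rfl⟩
    refine ⟨left_ne_mul.2 ?_, Or.inl ⟨i, rfl⟩⟩
    exact swap_eq_one_iff.not.2 (Fin.castSucc_lt_last i).ne

theorem starGraph_neighborSet (n : ℕ) (ξ : Perm (Fin (n + 1))) :
    (starGraph n).neighborSet ξ =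
      Set.range fun i : Fin n => ξ * swap (Fin.castSucc i) (Fin.last n) :=
  Set.ext fun _ => starGraph_adj_iff.trans (exists_congr fun _ => eq_comm)

/-- The map `ξ ↦ ξ(n+1)` is a covering map from `X_n` to `K_{n+1}`: for each vertex `ξ`
it restricts to a bijection from the neighbors of `ξ` onto the neighbors of `ξ(n+1)`. -/
theorem starGraph_covers_complete (n : ℕ) (ξ : Equiv.Perm (Fin (n + 1))) :
    Set.BijOn (fun η : Equiv.Perm (Fin (n + 1)) => η (Fin.last n))
      ((starGraph n).neighborSet ξ)
      ((⊤ : SimpleGraph (Fin (n + 1))).neighborSet (ξ (Fin.last n))) := by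
  have hcomp : ((fun η : Perm (Fin (n + 1)) => η (Fin.last n)) ∘
      fun i : Fin n => ξ * swap (Fin.castSucc i) (Fin.last n)) = ξ ∘ Fin.castSucc := by
    ext i
    simp
  have hinj : Function.Injective ((fun η : Perm (Fin (n + 1)) => η (Fin.last n)) ∘
      fun i : Fin n => ξ * swap (Fin.castSucc i) (Fin.last n)) :=
    hcomp ▸ ξ.injective.comp (Fin.castSucc_injective n)
  rw [starGraph_neighborSet, SimpleGraph.neighborSet_top]
  convert hinj.injOn_range.bijOn_image
  rw [← Set.range_comp, hcomp, Set.range_comp, Fin.range_castSucc_eq_compl_last,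
    ξ.image_compl, Set.image_singleton]
end

section
/- The quotient of the star graph X_3 = Cay(S_4, {(1,4),(2,4),(3,4)}) by the right action of the subgroup generated by the 3-cycle (1,2,3) is isomorphic to the cube graph Q_3 (the hypercube graph of dimension 3). -/
open Equiv Equiv.Perm

/-- The star graph `X_3 = Cay(S_4, {(1,4),(2,4),(3,4)})`. -/
def starGraph3 : SimpleGraph (Equiv.Perm (Fin 4)) :=
  SimpleGraph.fromRel (fun ξ η =>
    ∃ i : Fin 3, η = ξ * Equiv.swap (Fin.castSucc i) (Fin.last 3))

/-- The quotient of `X_3` by the right action of a subgroup `H ≤ S_4`: the vertices are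
the orbits (i.e. the left cosets `ξH`), and two orbits are adjacent iff they are distinct
and some representatives are adjacent in `X_3`. -/
def starQuotient (H : Subgroup (Equiv.Perm (Fin 4))) :
    SimpleGraph (Equiv.Perm (Fin 4) ⧸ H) :=
  SimpleGraph.fromRel (fun a b =>
    ∃ ξ η : Equiv.Perm (Fin 4),
      (ξ : Equiv.Perm (Fin 4) ⧸ H) = a ∧ (η : Equiv.Perm (Fin 4) ⧸ H) = b ∧
      starGraph3.Adj ξ η)

/-- The cube graph `Q_3`: vertices are `{0,1}^3`, two vertices adjacent iff they differ
in exactly one coordinate. -/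
def cubeGraph : SimpleGraph (Fin 3 → Bool) :=
  SimpleGraph.fromRel (fun x y =>
    (Finset.univ.filter fun i : Fin 3 => x i ≠ y i).card = 1)

/-!
The subgroup `⟨(1 2 3)⟩` consists exactly of the even permutations fixing `4`, so the coset
`ξ⟨(1 2 3)⟩` is determined by the pair `(ξ 4, sign ξ)`, and every pair occurs. Right
multiplication by a transposition `(i 4)` flips the sign and replaces `ξ 4` by `ξ i`, which can be
any other value. Hence the quotient is the graph on `Fin 4 × {±1}` in which `(v, s) ~ (w, t)` iff
`v ≠ w` and `s ≠ t`: this is `K_{4,4}` minus a perfect matching, which is the cube `Q_3`.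
-/

/-- The tensor product `K_α × K_β` of complete graphs; for `|β| = 2` it is the crown graph. -/
def crownGraph (α β : Type*) : SimpleGraph (α × β) where
  Adj p q := p.1 ≠ q.1 ∧ p.2 ≠ q.2
  symm.symm _ _ h := ⟨h.1.symm, h.2.symm⟩
  loopless.irrefl _ h := h.1 rfl

theorem crownGraph_adj {α β : Type*} {p q : α × β} :
    (crownGraph α β).Adj p q ↔ p.1 ≠ q.1 ∧ p.2 ≠ q.2 :=
  Iff.rfl

instance {α β : Type*} [DecidableEq α] [DecidableEq β] : DecidableRel (crownGraph α β).Adj :=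
  fun _ _ => decidable_of_iff' _ crownGraph_adj

theorem starGraph3_adj_iff {ξ η : Perm (Fin 4)} :
    starGraph3.Adj ξ η ↔ ∃ i : Fin 3, η = ξ * swap i.castSucc (Fin.last 3) := by
  rw [starGraph3, SimpleGraph.fromRel_adj]
  constructor
  · rintro ⟨-, h | ⟨i, rfl⟩⟩
    · exact h
    · exact ⟨i, by rw [mul_swap_mul_self]⟩
  · rintro ⟨i, rfl⟩
    refine ⟨fun h => (Fin.castSucc_lt_last i).ne (swap_eq_one_iff.mp ?_), Or.inl ⟨i, rfl⟩⟩
    simpa using h.symm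

noncomputable def starQuotientIsoOfClassifier {H : Subgroup (Perm (Fin 4))} {V : Type*}
    {G : SimpleGraph V} (f : Perm (Fin 4) → V)
    (hf : ∀ ξ η, f ξ = f η ↔ ξ⁻¹ * η ∈ H) (hsurj : Function.Surjective f)
    (hadj : ∀ ξ η, starGraph3.Adj ξ η → G.Adj (f ξ) (f η))
    (hlift : ∀ ξ η, G.Adj (f ξ) (f η) → ∃ η', f η' = f η ∧ starGraph3.Adj ξ η') :
    starQuotient H ≃g G where
  toEquiv := (Quotient.congrRight fun ξ η =>
      QuotientGroup.leftRel_apply.trans (hf ξ η).symm).trans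
    (Setoid.quotientKerEquivOfSurjective f hsurj)
  map_rel_iff' {a b} := by
    induction a using QuotientGroup.induction_on with | H ξ => ?_
    induction b using QuotientGroup.induction_on with | H η => ?_
    have mk_eq_mk {ξ η : Perm (Fin 4)} : (ξ : Perm (Fin 4) ⧸ H) = η ↔ f ξ = f η :=
      QuotientGroup.eq.trans (hf ξ η).symm
    change G.Adj (f ξ) (f η) ↔ _
    rw [starQuotient, SimpleGraph.fromRel_adj]
    constructor
    · intro h
      obtain ⟨η', hη', h'⟩ := hlift ξ η h
      exact ⟨fun he => G.ne_of_adj h (mk_eq_mk.1 he), Or.inl ⟨ξ, η', rfl, mk_eq_mk.2 hη', h'⟩⟩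
    · rintro ⟨-, ⟨ξ', η', hξ', hη', h⟩ | ⟨η', ξ', hη', hξ', h⟩⟩
      · rw [← mk_eq_mk.1 hξ', ← mk_eq_mk.1 hη']
        exact hadj _ _ h
      · rw [← mk_eq_mk.1 hξ', ← mk_eq_mk.1 hη']
        exact (hadj _ _ h).symm

def threeCycle : Perm (Fin 4) := swap 0 1 * swap 1 2

theorem mem_zpowers_threeCycle_iff {g : Perm (Fin 4)} :
    g ∈ Subgroup.zpowers threeCycle ↔ g (Fin.last 3) = Fin.last 3 ∧ sign g = 1 := by
  constructor
  · rintro ⟨k, rfl⟩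
    refine ⟨zpow_apply_eq_self_of_apply_eq_self (by decide) k, ?_⟩
    rw [map_zpow, show sign threeCycle = 1 by decide, one_zpow]
  · rintro ⟨hg, hsign⟩
    have h_pow : ∀ g : Perm (Fin 4), g (Fin.last 3) = Fin.last 3 → sign g = 1 →
        ∃ k : Fin 3, threeCycle ^ (k : ℕ) = g := by decide
    obtain ⟨k, rfl⟩ := h_pow g hg hsign
    exact Subgroup.pow_mem _ (Subgroup.mem_zpowers _) _

def cosetInvariant (ξ : Perm (Fin 4)) : Fin 4 × ℤˣ := (ξ (Fin.last 3), sign ξ)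

theorem cosetInvariant_eq_iff {ξ η : Perm (Fin 4)} :
    cosetInvariant ξ = cosetInvariant η ↔ ξ⁻¹ * η ∈ Subgroup.zpowers threeCycle := by
  rw [mem_zpowers_threeCycle_iff, cosetInvariant, cosetInvariant, Prod.ext_iff, mul_apply,
    inv_eq_iff_eq, map_mul, map_inv, inv_mul_eq_one, eq_comm (a := ξ _)]

theorem cosetInvariant_surjective : Function.Surjective cosetInvariant := by
  decide

theorem cosetInvariant_mul_swap (ξ : Perm (Fin 4)) (i : Fin 3) :
    cosetInvariant (ξ * swap i.castSucc (Fin.last 3)) = (ξ i.castSucc, -sign ξ) := by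
  rw [cosetInvariant, mul_apply, swap_apply_right, map_mul,
    sign_swap (Fin.castSucc_lt_last i).ne, mul_neg_one]

theorem crownGraph_adj_cosetInvariant {ξ η : Perm (Fin 4)} (h : starGraph3.Adj ξ η) :
    (crownGraph (Fin 4) ℤˣ).Adj (cosetInvariant ξ) (cosetInvariant η) := by
  obtain ⟨i, rfl⟩ := starGraph3_adj_iff.1 h
  rw [cosetInvariant_mul_swap, crownGraph_adj]
  exact ⟨ξ.injective.ne (Fin.castSucc_lt_last i).ne', units_ne_neg_self _⟩

theorem exists_adj_of_crownGraph_adj {ξ η : Perm (Fin 4)}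
    (h : (crownGraph (Fin 4) ℤˣ).Adj (cosetInvariant ξ) (cosetInvariant η)) :
    ∃ η', cosetInvariant η' = cosetInvariant η ∧ starGraph3.Adj ξ η' := by
  obtain ⟨hlast, hsign⟩ := crownGraph_adj.1 h
  obtain ⟨i, hi⟩ : ∃ i : Fin 3, i.castSucc = ξ⁻¹ (η (Fin.last 3)) := by
    rw [Fin.exists_castSucc_eq, Ne, ← eq_inv_iff_eq]
    exact hlast.symm
  refine ⟨ξ * swap i.castSucc (Fin.last 3), ?_, starGraph3_adj_iff.2 ⟨i, rfl⟩⟩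
  rw [cosetInvariant_mul_swap, eq_inv_iff_eq.1 hi]
  exact Prod.ext rfl (Int.units_ne_iff_eq_neg.1 hsign.symm).symm

theorem cubeGraph_adj_iff {x y : Fin 3 → Bool} : cubeGraph.Adj x y ↔ hammingDist x y = 1 := by
  change x ≠ y ∧ (hammingDist x y = 1 ∨ hammingDist y x = 1) ↔ _
  rw [hammingDist_comm y x, or_self, and_iff_right_iff_imp]
  rintro h rfl
  simp at h

/-- Even sign goes to the even-weight words, odd sign to their complements: two such words are at
Hamming distance one iff they have opposite parity and are not complementary. -/
def cubeVertex (p : Fin 4 × ℤˣ) : Fin 3 → Bool :=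
  let w := ![![false, false, false], ![true, true, false], ![true, false, true],
    ![false, true, true]] p.1
  if p.2 = 1 then w else fun i => !w i

theorem hammingDist_cubeVertex_eq_one_iff :
    ∀ p q, hammingDist (cubeVertex p) (cubeVertex q) = 1 ↔ (crownGraph (Fin 4) ℤˣ).Adj p q := by
  decide

noncomputable def crownCubeIso : crownGraph (Fin 4) ℤˣ ≃g cubeGraph where
  toEquiv := Equiv.ofBijective cubeVertex (by decide)
  map_rel_iff' := cubeGraph_adj_iff.trans (hammingDist_cubeVertex_eq_one_iff _ _)

/-- The quotient of the star graph `X_3` by the right action of `⟨(1,2,3)⟩` is isomorphic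
to the cube graph `Q_3`. Here `(1,2,3)` is the 3-cycle `c` with `c 0 = 1, c 1 = 2, c 2 = 0`
(0-indexed). -/
theorem starQuotient_three_cycle_iso_cube :
    Nonempty
      (starQuotient (Subgroup.zpowers
          (Equiv.swap (0 : Fin 4) 1 * Equiv.swap (1 : Fin 4) 2)) ≃g cubeGraph) :=
  ⟨(starQuotientIsoOfClassifier cosetInvariant (fun _ _ => cosetInvariant_eq_iff)
    cosetInvariant_surjective (fun _ _ => crownGraph_adj_cosetInvariant)
    (fun _ _ => exists_adj_of_crownGraph_adj)).trans crownCubeIso⟩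
end

section
/- The quotient of the star graph X_3 = Cay(S_4, {(1,4),(2,4),(3,4)}) by the right action of the subgroup generated by the transposition (1,2) is isomorphic to the truncated tetrahedron graph (the 3-regular graph on 12 vertices consisting of four triangles pairwise joined by single edges according to the tetrahedron's structure). -/
open Equiv Equiv.Perm

/-- The truncated tetrahedron graph: the 3-regular graph on the 12 ordered pairs
`(i,j)`, `i ≠ j`, of vertices of the tetrahedron, where each original vertex `i` yields
the triangle `{(i,j) : j ≠ i}`, and the triangles at `i` and `j` are joined by the single
edge `(i,j) — (j,i)`. -/
def truncatedTetrahedron : SimpleGraph {p : Fin 4 × Fin 4 // p.1 ≠ p.2} :=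
  SimpleGraph.fromRel (fun p q =>
    ((p : Fin 4 × Fin 4).1 = (q : Fin 4 × Fin 4).1 ∧
      (p : Fin 4 × Fin 4).2 ≠ (q : Fin 4 × Fin 4).2) ∨
    ((p : Fin 4 × Fin 4).1 = (q : Fin 4 × Fin 4).2 ∧
      (p : Fin 4 × Fin 4).2 = (q : Fin 4 × Fin 4).1))


/-!
`⟨(0 1)⟩` is the pointwise stabiliser of `{2, 3}` in `S_4`, so `ξ ⟨(0 1)⟩ ↦ (ξ 2, ξ 3)` identifies
the cosets with the ordered pairs of distinct points. Right multiplication by `(i 3)` replaces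
`ξ 3` by `ξ i`: for `i = 0, 1` this runs through the two other values with `ξ 2` kept (the
triangle at `ξ 2`), and for `i = 2` it swaps the pair (the edge between two triangles).
-/

namespace StarQuotient

abbrev H₀₁ : Subgroup (Perm (Fin 4)) := Subgroup.zpowers (swap 0 1)

def lastPair (ξ : Perm (Fin 4)) : {p : Fin 4 × Fin 4 // p.1 ≠ p.2} :=
  ⟨(ξ 2, ξ 3), ξ.injective.ne (by decide)⟩

theorem lastPair_surjective : Function.Surjective lastPair := by
  unfold Function.Surjective; decide

theorem mem_H₀₁_iff (σ : Perm (Fin 4)) : σ ∈ H₀₁ ↔ σ 2 = 2 ∧ σ 3 = 3 := by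
  constructor
  · intro hσ
    have hle : H₀₁ ≤ MulAction.stabilizer (Perm (Fin 4)) ((2, 3) : Fin 4 × Fin 4) :=
      Subgroup.zpowers_le.mpr (by decide)
    simpa [Prod.smul_mk, Perm.smul_def] using hle hσ
  · intro h
    obtain rfl | rfl : σ = 1 ∨ σ = swap 0 1 := by revert σ; decide
    exacts [one_mem _, Subgroup.mem_zpowers _]

theorem coe_eq_coe_iff_lastPair_eq (ξ η : Perm (Fin 4)) :
    (ξ : Perm (Fin 4) ⧸ H₀₁) = η ↔ lastPair ξ = lastPair η := by
  simp only [QuotientGroup.eq, mem_H₀₁_iff, Perm.mul_apply, Perm.inv_eq_iff_eq, lastPair,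
    Subtype.mk.injEq, Prod.mk.injEq]
  exact and_congr eq_comm eq_comm

noncomputable def quotientEquiv : Perm (Fin 4) ⧸ H₀₁ ≃ {p : Fin 4 × Fin 4 // p.1 ≠ p.2} :=
  Equiv.ofBijective
    (Quotient.lift lastPair fun ξ η h => (coe_eq_coe_iff_lastPair_eq ξ η).1 (Quotient.sound h))
    ⟨fun a b => QuotientGroup.induction_on a fun ξ => QuotientGroup.induction_on b fun η =>
        (coe_eq_coe_iff_lastPair_eq ξ η).2,
      lastPair_surjective.forall.2 fun ξ => ⟨ξ, rfl⟩⟩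

theorem quotientEquiv_coe (ξ : Perm (Fin 4)) : quotientEquiv ξ = lastPair ξ :=
  rfl

theorem starGraph3_adj_iff (ξ η : Perm (Fin 4)) :
    starGraph3.Adj ξ η ↔ ∃ i : Fin 3, η = ξ * swap i.castSucc (Fin.last 3) := by
  have hne (i : Fin 3) : ξ ≠ ξ * swap i.castSucc (Fin.last 3) := fun h =>
    (Fin.castSucc_lt_last i).ne (swap_eq_one_iff.mp (mul_eq_left.mp h.symm))
  simp only [starGraph3, SimpleGraph.fromRel_adj]
  constructor
  · rintro ⟨-, ⟨i, rfl⟩ | ⟨i, rfl⟩⟩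
    exacts [⟨i, rfl⟩, ⟨i, (mul_swap_mul_self _ _ _).symm⟩]
  · rintro ⟨i, rfl⟩
    exact ⟨hne i, Or.inl ⟨i, rfl⟩⟩

theorem truncatedTetrahedron_adj_iff (p q : {p : Fin 4 × Fin 4 // p.1 ≠ p.2}) :
    truncatedTetrahedron.Adj p q ↔
      (p.1.1 = q.1.1 ∧ p.1.2 ≠ q.1.2) ∨ (p.1.1 = q.1.2 ∧ p.1.2 = q.1.1) := by
  obtain ⟨⟨a, b⟩, hab⟩ := p
  obtain ⟨⟨c, d⟩, hcd⟩ := q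
  simp only [truncatedTetrahedron, SimpleGraph.fromRel_adj, ne_eq, Subtype.mk.injEq,
    Prod.mk.injEq]
  grind

theorem exists_lastPair_mul_swap_eq_iff (ξ : Perm (Fin 4))
    (q : {p : Fin 4 × Fin 4 // p.1 ≠ p.2}) :
    (∃ i : Fin 3, lastPair (ξ * swap i.castSucc (Fin.last 3)) = q) ↔
      truncatedTetrahedron.Adj (lastPair ξ) q := by
  -- Writing `q = (ξ k, ξ j)`, both sides become statements about the indices `k, j` alone.
  obtain ⟨⟨a, b⟩, hab⟩ := q
  obtain ⟨k, rfl⟩ := ξ.surjective a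
  obtain ⟨j, rfl⟩ := ξ.surjective b
  simp only [truncatedTetrahedron_adj_iff, lastPair, Subtype.mk.injEq, Prod.mk.injEq,
    Perm.mul_apply, EmbeddingLike.apply_eq_iff_eq, ne_eq]
  replace hab : k ≠ j := fun h => hab (congrArg ξ h)
  revert k j
  decide

theorem exists_starGraph3_adj_lift_iff (ξ η : Perm (Fin 4)) :
    (∃ ξ' η' : Perm (Fin 4), (ξ' : Perm (Fin 4) ⧸ H₀₁) = ξ ∧ (η' : Perm (Fin 4) ⧸ H₀₁) = η ∧
        starGraph3.Adj ξ' η') ↔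
      truncatedTetrahedron.Adj (lastPair ξ) (lastPair η) := by
  simp only [starGraph3_adj_iff, coe_eq_coe_iff_lastPair_eq]
  constructor
  · rintro ⟨ξ', _, hξ', hη', i, rfl⟩
    rw [← hξ', ← exists_lastPair_mul_swap_eq_iff]
    exact ⟨i, hη'⟩
  · intro h
    obtain ⟨i, hi⟩ := (exists_lastPair_mul_swap_eq_iff ξ _).2 h
    exact ⟨ξ, _, rfl, hi, i, rfl⟩

theorem starQuotient_adj_coe_iff (ξ η : Perm (Fin 4)) :
    (starQuotient H₀₁).Adj ξ η ↔ truncatedTetrahedron.Adj (lastPair ξ) (lastPair η) := by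
  rw [starQuotient, SimpleGraph.fromRel_adj, exists_starGraph3_adj_lift_iff,
    exists_starGraph3_adj_lift_iff, truncatedTetrahedron.adj_comm (lastPair η), or_self, ne_eq,
    coe_eq_coe_iff_lastPair_eq]
  exact and_iff_right_of_imp SimpleGraph.Adj.ne

end StarQuotient

/-- The quotient of the star graph `X_3` by the right action of `⟨(1,2)⟩` is isomorphic
to the truncated tetrahedron graph. -/
theorem starQuotient_transposition_iso_truncatedTetrahedron :
    Nonempty
      (starQuotient (Subgroup.zpowers (Equiv.swap (0 : Fin 4) 1)) ≃g
        truncatedTetrahedron) :=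
  ⟨⟨StarQuotient.quotientEquiv, fun {a b} =>
    QuotientGroup.induction_on a fun ξ => QuotientGroup.induction_on b fun η => by
      rw [StarQuotient.quotientEquiv_coe, StarQuotient.quotientEquiv_coe,
        StarQuotient.starQuotient_adj_coe_iff]⟩⟩
end

section
/- The characteristic polynomial of the adjacency matrix of the star graph X_3 = Cay(S_4, {(1,4),(2,4),(3,4)}) equals (x+3)(x+2)^6(x+1)^3 x^4 (x-1)^3 (x-2)^6 (x-3). -/
/-!
The adjacency operator of `X_3` acts on `v : S₄ → ℚ` by `(A v) ξ = ∑ i, v (ξ * (i 4))`: it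
exchanges the entry of `ξ` at position `4` with one of the other three (positions are `0, …, 3`
below, `Fin.last 3` playing the role of `4`). This makes eigenvectors easy to write down:
constants (eigenvalue `3`), `ξ ↦ f (ξ 4)` with `∑ f = 0` (eigenvalue `-1`),
`ξ ↦ g (ξ a) - g (ξ b)` for `a, b ≠ 4` (eigenvalue `2`) and `ξ ↦ h (ξ a) (ξ 4)` for `h`
symmetric with zero diagonal and zero row sums (eigenvalue `0`); multiplying by the sign
character negates the eigenvalue. Picking `1, 6, 3, 4, 3, 6, 1` independent eigenvectors for the
eigenvalues `-3, …, 3` gives `24` independent vectors, because eigenspaces of distinct eigenvalues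
are independent, hence an eigenbasis.
-/

open Equiv Equiv.Perm Polynomial
open scoped Classical

open Module
open scoped Matrix

theorem SimpleGraph.fromRel_exists_mul_adj {G ι : Type*} [Group G] {s : ι → G}
    (hs : ∀ i, s i ≠ 1) (hinv : ∀ i, (s i)⁻¹ ∈ Set.range s) {x y : G} :
    (SimpleGraph.fromRel fun x y => ∃ i, y = x * s i).Adj x y ↔ ∃ i, y = x * s i := by
  rw [SimpleGraph.fromRel_adj]
  constructor
  · rintro ⟨-, h | ⟨i, rfl⟩⟩
    · exact h
    · obtain ⟨j, hj⟩ := hinv i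
      exact ⟨j, by rw [hj, mul_inv_cancel_right]⟩
  · rintro ⟨i, rfl⟩
    exact ⟨fun h => hs i (by simpa using h.symm), Or.inl ⟨i, rfl⟩⟩

theorem SimpleGraph.adjMatrix_fromRel_exists_mul_mulVec_apply {G ι R : Type*} [Group G]
    [Fintype G] [Fintype ι] [NonAssocSemiring R] {s : ι → G} (hs_inj : Function.Injective s)
    (hs : ∀ i, s i ≠ 1) (hinv : ∀ i, (s i)⁻¹ ∈ Set.range s)
    [DecidableRel (SimpleGraph.fromRel fun x y : G => ∃ i, y = x * s i).Adj]
    (v : G → R) (x : G) :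
    ((SimpleGraph.fromRel fun x y : G => ∃ i, y = x * s i).adjMatrix R *ᵥ v) x =
      ∑ i, v (x * s i) := by
  classical
  have hnbr : (SimpleGraph.fromRel fun x y : G => ∃ i, y = x * s i).neighborFinset x =
      Finset.univ.image (x * s ·) := by
    ext y
    rw [mem_neighborFinset, fromRel_exists_mul_adj hs hinv]
    simp [eq_comm]
  rw [adjMatrix_mulVec_apply, hnbr,
    Finset.sum_image fun _ _ _ _ h => hs_inj (mul_left_cancel h)]

theorem Module.End.charpoly_eq_prod_of_basis {R M ι : Type*} [CommRing R] [AddCommGroup M]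
    [Module R M] [Module.Free R M] [Module.Finite R M] [Fintype ι] (f : End R M)
    (b : Basis ι R M) (μ : ι → R) (hμ : ∀ i, f (b i) = μ i • b i) :
    f.charpoly = ∏ i, (X - C (μ i)) := by
  classical
  have hdiag : LinearMap.toMatrix b b f = Matrix.diagonal μ := by
    ext i j
    rw [LinearMap.toMatrix_apply, hμ, map_smul, Basis.repr_self, Matrix.diagonal_apply]
    rcases eq_or_ne i j with rfl | h
    · simp
    · simp [h]
  rw [← f.charpoly_toMatrix b, hdiag, Matrix.charpoly_diagonal]

theorem LinearIndependent.sigma_of_eigenvectors {K V η : Type*} {ιs : η → Type*} [Field K]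
    [AddCommGroup V] [Module K V] (f : End K V) {μ : η → K} (hμ : Function.Injective μ)
    {v : (j : η) → ιs j → V} (hv : ∀ j, LinearIndependent K (v j))
    (heig : ∀ j i, f (v j i) = μ j • v j i) :
    LinearIndependent K fun ji : Σ j, ιs j => v ji.1 ji.2 := by
  have hspan : ∀ j, Submodule.span K (Set.range (v j)) ≤ f.eigenspace (μ j) := fun j =>
    Submodule.span_le.2 <| Set.range_subset_iff.2 fun i => End.mem_eigenspace_iff.2 (heig j i)
  refine linearIndependent_iUnion_finite hv fun j t _ hj => ?_
  refine ((f.eigenspaces_iSupIndep.comp hμ) j).mono (hspan j) ?_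
  exact iSup₂_le fun k hk => le_iSup₂_of_le k (ne_of_mem_of_not_mem hk hj) (hspan k)

theorem Module.End.charpoly_eq_prod_pow_of_linearIndependent {K V η : Type*} [Field K]
    [AddCommGroup V] [Module K V] [FiniteDimensional K V] [Fintype η] (f : End K V)
    {μ : η → K} (hμ : Function.Injective μ) {m : η → ℕ} (v : (j : η) → Fin (m j) → V)
    (hv : ∀ j, LinearIndependent K (v j)) (heig : ∀ j i, f (v j i) = μ j • v j i)
    (hdim : ∑ j, m j = finrank K V) :
    f.charpoly = ∏ j, (X - C (μ j)) ^ m j := by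
  let b := basisOfLinearIndependentOfCardEqFinrank' _
    (LinearIndependent.sigma_of_eigenvectors f hμ hv heig) (by simpa using hdim)
  rw [f.charpoly_eq_prod_of_basis b (fun ji => μ ji.1) fun ji => by simpa [b] using heig _ _,
    Fintype.prod_sigma]
  simp

theorem LinearIndependent.of_eval_triangular {ι X K : Type*} [Field K] [Fintype ι]
    [LinearOrder ι] {v : ι → X → K} (p : ι → X)
    (htri : ∀ i j, j < i → v i (p j) = 0) (hdiag : ∀ i, v i (p i) ≠ 0) :
    LinearIndependent K v := by
  classical
  have hdet : (Matrix.of fun i j => v i (p j)).det ≠ 0 := by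
    rw [Matrix.det_of_isUpperTriangular (M := Matrix.of fun i j => v i (p j))
      fun i j h => htri i j h]
    exact Finset.prod_ne_zero_iff.2 fun i _ => hdiag i
  exact .of_comp (LinearMap.funLeft K K p) (Matrix.linearIndependent_rows_of_det_ne_zero hdet)

theorem LinearIndependent.mul_left {ι X K : Type*} [Field K] {v : ι → X → K}
    (hv : LinearIndependent K v) {s : X → K} (hs : ∀ x, s x ≠ 0) :
    LinearIndependent K fun i x => s x * v i x :=
  hv.map' (LinearMap.mulLeft K s) (LinearMap.ker_eq_bot.2 fun _ _ h =>
    funext fun x => mul_left_cancel₀ (hs x) (congrFun h x))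

section StarAdj

variable {K : Type*} [CommRing K] (n : ℕ)

def starAdj : End K (Perm (Fin (n + 1)) → K) :=
  ∑ i : Fin n, LinearMap.funLeft K K (· * swap i.castSucc (Fin.last n))

variable {n}

theorem starAdj_apply (v : Perm (Fin (n + 1)) → K) (ξ : Perm (Fin (n + 1))) :
    starAdj n v ξ = ∑ i : Fin n, v (ξ * swap i.castSucc (Fin.last n)) := by
  simp [starAdj, LinearMap.funLeft_apply]

theorem starAdj_const (c : K) : starAdj n (fun _ => c) = (n : K) • fun _ => c := by
  ext ξ
  simp [starAdj_apply]

theorem starAdj_sign_mul (v : Perm (Fin (n + 1)) → K) :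
    starAdj n (fun ξ => (sign ξ : K) * v ξ) = -fun ξ => (sign ξ : K) * starAdj n v ξ := by
  ext ξ
  simp [starAdj_apply, sign_swap (Fin.castSucc_lt_last _).ne, Finset.mul_sum]

theorem starAdj_sign_mul_of_eq_smul {v : Perm (Fin (n + 1)) → K} {μ : K}
    (hv : starAdj n v = μ • v) :
    starAdj n (fun ξ => (sign ξ : K) * v ξ) = (-μ) • fun ξ => (sign ξ : K) * v ξ := by
  rw [starAdj_sign_mul, hv]
  ext ξ
  simp only [Pi.neg_apply, Pi.smul_apply, smul_eq_mul]
  ring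

theorem starAdj_comp_last (f : Fin (n + 1) → K) (hf : ∑ x, f x = 0) :
    starAdj n (fun ξ => f (ξ (Fin.last n))) = (-1 : K) • fun ξ => f (ξ (Fin.last n)) := by
  ext ξ
  have hsum : ∑ i : Fin n, f (ξ i.castSucc) + f (ξ (Fin.last n)) = 0 := by
    rw [← Fin.sum_univ_castSucc (fun x => f (ξ x)), Equiv.sum_comp ξ f, hf]
  simp only [starAdj_apply, Perm.mul_apply, swap_apply_right, Pi.smul_apply, smul_eq_mul]
  linear_combination hsum

theorem starAdj_comp_castSucc_apply (g : Fin (n + 1) → K) (a : Fin n) (ξ : Perm (Fin (n + 1))) :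
    starAdj n (fun ξ => g (ξ a.castSucc)) ξ =
      ((n : K) - 1) * g (ξ a.castSucc) + g (ξ (Fin.last n)) := by
  have hterm : ∀ i : Fin n, g ((ξ * swap i.castSucc (Fin.last n)) a.castSucc) =
      g (ξ a.castSucc) + if i = a then g (ξ (Fin.last n)) - g (ξ a.castSucc) else 0 := by
    intro i
    rcases eq_or_ne i a with rfl | hia
    · simp
    · rw [Perm.mul_apply, swap_apply_of_ne_of_ne ((Fin.castSucc_injective n).ne hia.symm)
        (Fin.castSucc_lt_last a).ne, if_neg hia, add_zero]
  simp only [starAdj_apply, hterm, Finset.sum_add_distrib, Finset.sum_const, Finset.card_univ,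
    Fintype.card_fin, nsmul_eq_mul, Finset.sum_ite_eq', Finset.mem_univ, if_true]
  ring

theorem starAdj_comp_castSucc_sub (g : Fin (n + 1) → K) (a b : Fin n) :
    starAdj n (fun ξ => g (ξ a.castSucc) - g (ξ b.castSucc)) =
      ((n : K) - 1) • fun ξ => g (ξ a.castSucc) - g (ξ b.castSucc) := by
  ext ξ
  change starAdj n ((fun ξ => g (ξ a.castSucc)) - fun ξ => g (ξ b.castSucc)) ξ = _
  rw [map_sub, Pi.sub_apply, starAdj_comp_castSucc_apply, starAdj_comp_castSucc_apply,
    Pi.smul_apply, smul_eq_mul]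
  ring

theorem starAdj_comp_castSucc_last (h : Fin (n + 1) → Fin (n + 1) → K)
    (hsymm : ∀ x y, h x y = h y x) (hdiag : ∀ x, h x x = 0) (hrow : ∀ x, ∑ y, h x y = 0)
    (a : Fin n) : starAdj n (fun ξ => h (ξ a.castSucc) (ξ (Fin.last n))) = 0 := by
  ext ξ
  set x := ξ a.castSucc
  have hterm : ∀ i : Fin n, h ((ξ * swap i.castSucc (Fin.last n)) a.castSucc)
      ((ξ * swap i.castSucc (Fin.last n)) (Fin.last n)) =
      h x (ξ i.castSucc) + if i = a then h x (ξ (Fin.last n)) - h x x else 0 := by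
    intro i
    rcases eq_or_ne i a with rfl | hia
    · simp [x, hsymm (ξ (Fin.last n))]
    · rw [Perm.mul_apply, Perm.mul_apply, swap_apply_of_ne_of_ne
        ((Fin.castSucc_injective n).ne hia.symm) (Fin.castSucc_lt_last a).ne, swap_apply_right,
        if_neg hia, add_zero]
  have hsum : ∑ i : Fin n, h x (ξ i.castSucc) + h x (ξ (Fin.last n)) = 0 := by
    rw [← Fin.sum_univ_castSucc (fun y => h x (ξ y)), Equiv.sum_comp ξ (h x), hrow]
  simp only [starAdj_apply, hterm, Finset.sum_add_distrib, Finset.sum_ite_eq', Finset.mem_univ,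
    if_true, hdiag, Pi.zero_apply]
  linear_combination hsum

end StarAdj

theorem toLin'_adjMatrix_starGraph3 {K : Type*} [CommRing K] :
    Matrix.toLin' (starGraph3.adjMatrix K) = starAdj 3 :=
  LinearMap.ext fun v => funext fun ξ => by
    rw [Matrix.toLin'_apply, starAdj_apply, starGraph3]
    convert SimpleGraph.adjMatrix_fromRel_exists_mul_mulVec_apply
      (s := fun i : Fin 3 => swap i.castSucc (Fin.last 3))
      ((swap_injective_of_right _).comp (Fin.castSucc_injective 3))
      (fun i => swap_eq_one_iff.not.2 (Fin.castSucc_lt_last i).ne)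
      (fun i => ⟨i, (swap_inv _ _).symm⟩) v ξ

namespace StarGraph3

def eigvecNegOne (k : Fin 3) : Perm (Fin 4) → ℚ :=
  fun ξ => (Pi.single k.castSucc 1 - Pi.single (Fin.last 3) 1 : Fin 4 → ℚ) (ξ (Fin.last 3))

/-- `(a, b, k)` stands for the eigenvector `ξ ↦ [ξ a = k] - [ξ b = k]`. The triples, and the
points in `eigvecTwo_linearIndependent`, are chosen so that the evaluation matrix is triangular. -/
def eigvecTwoParams : Fin 6 → Fin 3 × Fin 3 × Fin 4 :=
  ![(0, 1, 0), (0, 1, 3), (0, 2, 1), (0, 1, 2), (0, 2, 3), (1, 2, 0)]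

def eigvecTwo (i : Fin 6) : Perm (Fin 4) → ℚ :=
  let (a, b, k) := eigvecTwoParams i
  fun ξ => (Pi.single k 1 : Fin 4 → ℚ) (ξ a.castSucc) -
    (Pi.single k 1 : Fin 4 → ℚ) (ξ b.castSucc)

def pairWeight : Fin 4 → Fin 4 → ℚ := !![0, 1, -1, 0; 1, 0, 0, -1; -1, 0, 0, 1; 0, -1, 1, 0]

/-- `(a, s)` stands for `ξ ↦ (1 + s * sign ξ) * pairWeight (ξ a) (ξ 3)`, supported on the
permutations of sign `s`; splitting by sign is what makes the evaluation matrix triangular. -/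
def eigvecZeroParams : Fin 4 → Fin 3 × ℚ := ![(0, 1), (0, -1), (1, 1), (1, -1)]

def eigvecZero (i : Fin 4) : Perm (Fin 4) → ℚ :=
  let (a, s) := eigvecZeroParams i
  fun ξ => (1 + s * (sign ξ : ℚ)) * pairWeight (ξ a.castSucc) (ξ (Fin.last 3))

theorem starAdj_eigvecNegOne (k : Fin 3) :
    starAdj 3 (eigvecNegOne k) = (-1 : ℚ) • eigvecNegOne k :=
  starAdj_comp_last _ (by simp [Finset.sum_sub_distrib])

theorem starAdj_eigvecTwo (i : Fin 6) : starAdj 3 (eigvecTwo i) = (2 : ℚ) • eigvecTwo i := by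
  rw [eigvecTwo, starAdj_comp_castSucc_sub]
  norm_num

theorem starAdj_eigvecZero (i : Fin 4) : starAdj 3 (eigvecZero i) = 0 := by
  let u : Perm (Fin 4) → ℚ := fun ξ =>
    pairWeight (ξ (eigvecZeroParams i).1.castSucc) (ξ (Fin.last 3))
  have hu : starAdj 3 u = 0 :=
    starAdj_comp_castSucc_last _ (by decide +kernel) (by decide +kernel) (by decide +kernel) _
  have hsplit : eigvecZero i = u + (eigvecZeroParams i).2 • fun ξ => (sign ξ : ℚ) * u ξ := by
    ext ξ
    simp only [eigvecZero, u, Pi.add_apply, Pi.smul_apply, smul_eq_mul]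
    ring
  rw [hsplit, map_add, map_smul, hu, starAdj_sign_mul_of_eq_smul (hu.trans (zero_smul ℚ u).symm)]
  simp

theorem eigvecNegOne_linearIndependent : LinearIndependent ℚ eigvecNegOne :=
  .of_eval_triangular ![swap 0 3, swap 1 3, swap 2 3] (by decide +kernel) (by decide +kernel)

theorem eigvecTwo_linearIndependent : LinearIndependent ℚ eigvecTwo :=
  .of_eval_triangular ![1, swap 1 3, swap 1 3 * swap 2 3, swap 1 2, swap 2 3, swap 0 1]
    (by decide +kernel) (by decide +kernel)

theorem eigvecZero_linearIndependent : LinearIndependent ℚ eigvecZero :=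
  .of_eval_triangular ![swap 1 2 * swap 2 3, swap 2 3, 1, swap 1 2]
    (by decide +kernel) (by decide +kernel)

def eigMult : Fin 7 → ℕ := ![1, 6, 3, 4, 3, 6, 1]

def eigvec : (j : Fin 7) → Fin (eigMult j) → Perm (Fin 4) → ℚ
  | 0 => fun _ ξ => sign ξ * 1
  | 1 => fun i ξ => sign ξ * eigvecTwo i ξ
  | 2 => eigvecNegOne
  | 3 => eigvecZero
  | 4 => fun i ξ => sign ξ * eigvecNegOne i ξ
  | 5 => eigvecTwo
  | 6 => fun _ _ => 1

theorem starAdj_eigvec : ∀ j i, starAdj 3 (eigvec j i) = ((j : ℚ) - 3) • eigvec j i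
  | 0, _ => by
    rw [show ((0 : Fin 7) : ℚ) - 3 = -((3 : ℕ) : ℚ) by norm_num]
    exact starAdj_sign_mul_of_eq_smul (starAdj_const 1)
  | 1, i => by
    rw [show ((1 : Fin 7) : ℚ) - 3 = -2 by norm_num]
    exact starAdj_sign_mul_of_eq_smul (starAdj_eigvecTwo i)
  | 2, i => by
    rw [show ((2 : Fin 7) : ℚ) - 3 = -1 by norm_num]
    exact starAdj_eigvecNegOne i
  | 3, i => by
    rw [show ((3 : Fin 7) : ℚ) - 3 = 0 by norm_num, zero_smul]
    exact starAdj_eigvecZero i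
  | 4, i => by
    rw [show ((4 : Fin 7) : ℚ) - 3 = -(-1) by norm_num]
    exact starAdj_sign_mul_of_eq_smul (starAdj_eigvecNegOne i)
  | 5, i => by
    rw [show ((5 : Fin 7) : ℚ) - 3 = 2 by norm_num]
    exact starAdj_eigvecTwo i
  | 6, _ => by
    rw [show ((6 : Fin 7) : ℚ) - 3 = ((3 : ℕ) : ℚ) by norm_num]
    exact starAdj_const 1

theorem eigvec_linearIndependent (j : Fin 7) : LinearIndependent ℚ (eigvec j) := by
  have hsign (ξ : Perm (Fin 4)) : (sign ξ : ℚ) ≠ 0 := Int.cast_ne_zero.2 (Units.ne_zero _)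
  have hconst : LinearIndependent ℚ fun (_ : Fin 1) (_ : Perm (Fin 4)) => (1 : ℚ) :=
    linearIndependent_unique_iff.2 one_ne_zero
  match j with
  | 0 => exact hconst.mul_left hsign
  | 1 => exact eigvecTwo_linearIndependent.mul_left hsign
  | 2 => exact eigvecNegOne_linearIndependent
  | 3 => exact eigvecZero_linearIndependent
  | 4 => exact eigvecNegOne_linearIndependent.mul_left hsign
  | 5 => exact eigvecTwo_linearIndependent
  | 6 => exact hconst

end StarGraph3

theorem charpoly_starAdj_three :
    (starAdj 3 : End ℚ (Perm (Fin 4) → ℚ)).charpoly =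
      ∏ j : Fin 7, (X - C ((j : ℚ) - 3)) ^ StarGraph3.eigMult j := by
  have hinj : Function.Injective fun j : Fin 7 => (j : ℚ) - 3 := fun _ _ h =>
    Fin.ext (by simpa using h)
  have hdim : ∑ j, StarGraph3.eigMult j = finrank ℚ (Perm (Fin 4) → ℚ) := by
    rw [Module.finrank_fintype_fun_eq_card, Fintype.card_perm, Fintype.card_fin]
    rfl
  exact (starAdj 3).charpoly_eq_prod_pow_of_linearIndependent (V := Perm (Fin 4) → ℚ) hinj
    StarGraph3.eigvec StarGraph3.eigvec_linearIndependent StarGraph3.starAdj_eigvec hdim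

/-- The characteristic polynomial of the adjacency matrix of the star graph `X_3` is
`(x+3)(x+2)^6(x+1)^3 x^4 (x-1)^3 (x-2)^6 (x-3)`. -/
theorem starGraph3_charpoly :
    (SimpleGraph.adjMatrix ℤ starGraph3).charpoly =
      (X + 3) * (X + 2) ^ 6 * (X + 1) ^ 3 * X ^ 4 * (X - 1) ^ 3 * (X - 2) ^ 6
        * (X - 3) := by
  have hmap : (starGraph3.adjMatrix ℤ).map (Int.castRingHom ℚ) = starGraph3.adjMatrix ℚ := by
    ext ξ η
    simp [SimpleGraph.adjMatrix_apply]
  apply map_injective (Int.castRingHom ℚ) Int.cast_injective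
  rw [← Matrix.charpoly_map, hmap, ← Matrix.charpoly_toLin', toLin'_adjMatrix_starGraph3,
    charpoly_starAdj_three]
  simp only [Fin.prod_univ_seven, StarGraph3.eigMult, Matrix.cons_val]
  norm_num [map_ofNat]
end

section
/- The characteristic polynomial of the adjacency matrix of the truncated tetrahedron graph equals (x+2)^3(x+1)^3 x^2 (x-2)^3 (x-3). -/
/-!
Write the adjacency operator on ordered pairs `(i, j)` as `T + σ`, where `T` joins pairs with the
same first coordinate and `σ (i, j) = (j, i)`. For `a : Fin 4 → ℤ` with `∑ k, a k = 0`, the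
vectors `3 a i + a j` and `a j` are eigenvectors for `2` and `-1`. Symmetric, resp. antisymmetric,
vectors `x i j` with `∑ j, x i j = 0` for every `i` satisfy `T x = -x` and `σ x = ±x`, giving `0`
and `-2`; the constant vector gives `3`. Built from the three `±1` vectors of sum zero, these are
twelve pairwise orthogonal integer eigenvectors, so they form a basis over `ℚ` and determine the
characteristic polynomial.
-/

open Polynomial
open scoped Classical

namespace Matrix

variable {R : Type*} [CommRing R] [IsDomain R] {m n : Type*}
  [Fintype m] [DecidableEq m] [Fintype n] [DecidableEq n]

theorem charpoly_eq_of_mul_eq_mul {A B P : Matrix n n R} (h : A * P = P * B) (hP : P.det ≠ 0) :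
    A.charpoly = B.charpoly := by
  set P' := (C : R →+* R[X]).mapMatrix P
  have hX : Commute (scalar n (X : R[X])) P' := scalar_commute _ (Commute.all _) _
  have hchar : charmatrix A * P' = P' * charmatrix B := by
    rw [charmatrix, charmatrix, sub_mul, mul_sub, hX.eq, ← map_mul, ← map_mul, h]
  have hdet := congrArg det hchar
  rw [det_mul, det_mul, mul_comm, ← RingHom.map_det] at hdet
  exact mul_left_cancel₀ (C_ne_zero.mpr hP) hdet

theorem det_ne_zero_of_transpose_mul_self_eq_diagonal {P : Matrix n n R} {w : n → R}
    (h : Pᵀ * P = diagonal w) (hw : ∀ i, w i ≠ 0) : P.det ≠ 0 := by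
  have hsq : P.det * P.det = ∏ i, w i := by
    rw [← det_diagonal, ← h, det_mul, det_transpose]
  intro h0
  rw [h0, zero_mul] at hsq
  exact Finset.prod_ne_zero_iff.mpr (fun i _ ↦ hw i) hsq.symm

theorem charpoly_eq_prod_of_orthogonal_eigenvectors (hcard : Fintype.card m = Fintype.card n)
    {A : Matrix m m R} {P : Matrix m n R} {d w : n → R} (hAP : A * P = P * diagonal d)
    (hP : Pᵀ * P = diagonal w) (hw : ∀ i, w i ≠ 0) :
    A.charpoly = ∏ i, (X - C (d i)) := by
  let e : m ≃ n := Fintype.equivOfCardEq hcard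
  have hAP' : A * P.submatrix id e = P.submatrix id e * diagonal (d ∘ e) := by
    rw [← submatrix_diagonal_equiv, submatrix_mul_equiv, ← hAP]
    exact (submatrix_mul A P id id e Function.bijective_id).symm
  have hP' : (P.submatrix id e)ᵀ * P.submatrix id e = diagonal (w ∘ e) := by
    rw [transpose_submatrix, ← submatrix_mul _ _ e id e Function.bijective_id, hP,
      submatrix_diagonal_equiv]
  rw [charpoly_eq_of_mul_eq_mul hAP'
      (det_ne_zero_of_transpose_mul_self_eq_diagonal hP' fun i ↦ hw (e i)),
    charpoly_diagonal]
  exact e.prod_comp fun i ↦ X - C (d i)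

end Matrix

namespace TruncatedTetrahedron

open Matrix

abbrev V : Type := {p : Fin 4 × Fin 4 // p.1 ≠ p.2}

/-- `SimpleGraph.adjMatrix ℤ truncatedTetrahedron` is built with the classical decidability
instance, which `decide` cannot evaluate; this is the same matrix with a decidable condition. -/
def adjacency : Matrix V V ℤ := of fun p q ↦
  if p ≠ q ∧ (p.1.1 = q.1.1 ∨ p.1.1 = q.1.2 ∧ p.1.2 = q.1.1) then 1 else 0

theorem adj_iff (p q : V) : truncatedTetrahedron.Adj p q ↔
    p ≠ q ∧ (p.1.1 = q.1.1 ∨ p.1.1 = q.1.2 ∧ p.1.2 = q.1.1) := by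
  rw [truncatedTetrahedron, SimpleGraph.fromRel_adj]
  revert p q
  decide

theorem adjMatrix_eq_adjacency : SimpleGraph.adjMatrix ℤ truncatedTetrahedron = adjacency := by
  ext p q
  rw [SimpleGraph.adjMatrix_apply, adjacency, of_apply]
  exact if_congr (adj_iff p q) rfl rfl

def signVector : Fin 3 → Fin 4 → ℤ := ![![1, 1, -1, -1], ![1, -1, 1, -1], ![1, -1, -1, 1]]

def eigenbasis : Matrix V (Fin 12) ℤ := of fun v ↦
  let s k := signVector k v.1.1
  let t k := signVector k v.1.2
  ![1, 3 * s 0 + t 0, 3 * s 1 + t 1, 3 * s 2 + t 2,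
    s 0 * t 0 - s 1 * t 1, s 0 * t 0 + s 1 * t 1 - 2 * s 2 * t 2,
    t 0, t 1, t 2,
    s 0 * t 1 - s 1 * t 0, s 1 * t 2 - s 2 * t 1, s 2 * t 0 - s 0 * t 2]

def eigenvalues : Fin 12 → ℤ := ![3, 2, 2, 2, 0, 0, -1, -1, -1, -2, -2, -2]

theorem adjacency_mul_eigenbasis :
    adjacency * eigenbasis = eigenbasis * diagonal eigenvalues := by
  decide

theorem eigenbasis_transpose_mul_self :
    eigenbasisᵀ * eigenbasis = diagonal ![12, 96, 96, 96, 32, 96, 12, 12, 12, 32, 32, 32] := by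
  decide

end TruncatedTetrahedron

/-- The characteristic polynomial of the adjacency matrix of the truncated tetrahedron
graph is `(x+2)^3(x+1)^3 x^2 (x-2)^3 (x-3)`. -/
theorem truncatedTetrahedron_charpoly :
    (SimpleGraph.adjMatrix ℤ truncatedTetrahedron).charpoly =
      (X + 2) ^ 3 * (X + 1) ^ 3 * X ^ 2 * (X - 2) ^ 3 * (X - 3) := by
  open TruncatedTetrahedron Matrix in
  rw [adjMatrix_eq_adjacency, charpoly_eq_prod_of_orthogonal_eigenvectors (by rfl)
    adjacency_mul_eigenbasis eigenbasis_transpose_mul_self (by decide)]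
  simp only [Fin.prod_univ_succ, Fin.prod_univ_zero, TruncatedTetrahedron.eigenvalues,
    Matrix.cons_val_zero, Matrix.cons_val_succ, map_ofNat, map_neg, map_one, map_zero]
  ring
end

section
/- The multiset {±|1 + e^{2πki/6} + e^{2π(−k+3l)i/6}| : k ∈ Z/6Z, l ∈ Z/2Z} consists only of integers, and equals the multiset {3,−3, 2,2,2,2,2,2, −2,−2,−2,−2,−2,−2, 1,1,1, −1,−1,−1, 0,0,0,0}. -/
open Complex

/-- The value `|1 + e^{2πki/6} + e^{2π(−k+3l)i/6}|` for `k ∈ ℤ/6ℤ`, `l ∈ ℤ/2ℤ`. -/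
noncomputable def honeycombEig (k : ZMod 6) (l : ZMod 2) : ℝ :=
  norm
    (1 + Complex.exp (2 * Real.pi * (k.val : ℂ) * Complex.I / 6)
       + Complex.exp (2 * Real.pi * (((-k + 3 * (l.val : ZMod 6)).val : ℕ) : ℂ)
            * Complex.I / 6))

/-- The 24-element multiset `{± honeycombEig k l}` over all `(k, l) ∈ ℤ/6ℤ × ℤ/2ℤ`. -/
noncomputable def honeycombSpectrum : Multiset ℝ :=
  ((Finset.univ : Finset (ZMod 6 × ZMod 2)).val.map fun p => honeycombEig p.1 p.2) +
  ((Finset.univ : Finset (ZMod 6 × ZMod 2)).val.map fun p => -honeycombEig p.1 p.2)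

/-!
With `ζ = e^{πi/3}` one has `ζ² = ζ - 1`, so every sum of powers of `ζ` is `a + bζ` with
`a, b ∈ ℤ`, and `|a + bζ| = √(a² + ab + b²)`. For the twelve sums in question the norm form
`a² + ab + b²` takes the values `9, 4, 4, 4, 4, 4, 4, 1, 1, 1, 0, 0`, all perfect squares.
-/

noncomputable def zeta6 : ℂ := exp (2 * Real.pi * I / 6)

lemma zeta6_eq : zeta6 = 1 / 2 + (Real.sqrt 3 / 2) * I := by
  have h : 2 * (Real.pi : ℂ) * I / 6 = ((Real.pi / 3 : ℝ) : ℂ) * I := by push_cast; ring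
  rw [zeta6, h, exp_mul_I, ← ofReal_cos, ← ofReal_sin, Real.cos_pi_div_three,
    Real.sin_pi_div_three]
  push_cast
  ring

lemma zeta6_sq : zeta6 ^ 2 = zeta6 - 1 := by
  have h3 : ((Real.sqrt 3 : ℝ) : ℂ) ^ 2 = 3 := by
    norm_cast
    exact Real.sq_sqrt (by norm_num)
  rw [zeta6_eq]
  linear_combination (I ^ 2 / 4) * h3 + (3 / 4 : ℂ) * I_sq

lemma exp_two_pi_mul_I_div_six (n : ℕ) : exp (2 * Real.pi * n * I / 6) = zeta6 ^ n := by
  rw [zeta6, ← exp_nat_mul]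
  ring_nf

lemma norm_add_mul_zeta6 (a b : ℝ) : ‖(a : ℂ) + b * zeta6‖ = √(a ^ 2 + a * b + b ^ 2) := by
  have h : (a : ℂ) + b * zeta6 = ((a + b / 2 : ℝ) : ℂ) + ((b * Real.sqrt 3 / 2 : ℝ) : ℂ) * I := by
    rw [zeta6_eq]
    push_cast
    ring
  rw [h, norm_add_mul_I]
  congr 1
  nlinarith [Real.sq_sqrt (show (0 : ℝ) ≤ 3 by norm_num)]

def eisensteinPow : ℕ → ℤ × ℤ
  | 0 => (1, 0)
  | n + 1 => (-(eisensteinPow n).2, (eisensteinPow n).1 + (eisensteinPow n).2)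

lemma zeta6_pow_eq (n : ℕ) :
    zeta6 ^ n = ((eisensteinPow n).1 : ℂ) + ((eisensteinPow n).2 : ℂ) * zeta6 := by
  induction n with
  | zero => simp [eisensteinPow]
  | succ n ih =>
    rw [pow_succ, ih, eisensteinPow]
    push_cast
    linear_combination ((eisensteinPow n).2 : ℂ) * zeta6_sq

def eisensteinNorm (p : ℤ × ℤ) : ℤ := p.1 ^ 2 + p.1 * p.2 + p.2 ^ 2

def honeycombCoeffs (k : ZMod 6) (l : ZMod 2) : ℤ × ℤ :=
  eisensteinPow 0 + eisensteinPow k.val + eisensteinPow (-k + 3 * (l.val : ZMod 6)).val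

lemma honeycombEig_eq_sqrt (k : ZMod 6) (l : ZMod 2) :
    honeycombEig k l = √(eisensteinNorm (honeycombCoeffs k l)) := by
  rw [honeycombEig, exp_two_pi_mul_I_div_six, exp_two_pi_mul_I_div_six, ← pow_zero zeta6,
    zeta6_pow_eq, zeta6_pow_eq, zeta6_pow_eq, eisensteinNorm]
  push_cast
  rw [← norm_add_mul_zeta6]
  simp only [honeycombCoeffs, Prod.fst_add, Prod.snd_add]
  push_cast
  congr 1
  ring

lemma map_eisensteinNorm_honeycombCoeffs :
    (Finset.univ : Finset (ZMod 6 × ZMod 2)).val.map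
        (fun p => eisensteinNorm (honeycombCoeffs p.1 p.2)) =
      {9, 4, 4, 4, 4, 4, 4, 1, 1, 1, 0, 0} := by
  decide

lemma honeycombSpectrum_eq_map_sqrt :
    honeycombSpectrum =
      Multiset.map (fun n : ℤ => √(n : ℝ)) {9, 4, 4, 4, 4, 4, 4, 1, 1, 1, 0, 0} +
      Multiset.map (fun n : ℤ => -√(n : ℝ)) {9, 4, 4, 4, 4, 4, 4, 1, 1, 1, 0, 0} := by
  rw [← map_eisensteinNorm_honeycombCoeffs, Multiset.map_map, Multiset.map_map]
  simp only [honeycombSpectrum, Function.comp_def, honeycombEig_eq_sqrt]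

lemma honeycombSpectrum_eq_map_intCast :
    honeycombSpectrum =
      ({3, -3, 2, 2, 2, 2, 2, 2, -2, -2, -2, -2, -2, -2,
        1, 1, 1, -1, -1, -1, 0, 0, 0, 0} : Multiset ℤ).map (Int.cast : ℤ → ℝ) := by
  rw [honeycombSpectrum_eq_map_sqrt,
    show ({3, -3, 2, 2, 2, 2, 2, 2, -2, -2, -2, -2, -2, -2,
        1, 1, 1, -1, -1, -1, 0, 0, 0, 0} : Multiset ℤ) =
      {3, 2, 2, 2, 2, 2, 2, 1, 1, 1, 0, 0} + {-3, -2, -2, -2, -2, -2, -2, -1, -1, -1, 0, 0} by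
    decide]
  norm_num [Multiset.insert_eq_cons]

/-- The multiset `{±|1 + e^{2πki/6} + e^{2π(−k+3l)i/6}|}` consists of integers, and equals
`{3,−3,2,2,2,2,2,2,−2,−2,−2,−2,−2,−2,1,1,1,−1,−1,−1,0,0,0,0}`. -/
theorem honeycombSpectrum_integral :
    (∀ x ∈ honeycombSpectrum, ∃ m : ℤ, x = (m : ℝ)) ∧
    honeycombSpectrum =
      ({3, -3, 2, 2, 2, 2, 2, 2, -2, -2, -2, -2, -2, -2,
        1, 1, 1, -1, -1, -1, 0, 0, 0, 0} : Multiset ℝ) := by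
  rw [honeycombSpectrum_eq_map_intCast]
  refine ⟨fun x hx => ?_, by simp [Multiset.insert_eq_cons]⟩
  obtain ⟨m, -, rfl⟩ := Multiset.mem_map.mp hx
  exact ⟨m, rfl⟩
end
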